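/- (Sieklucki, 1969) For each n ≥ 1, every continuous map f : Iⁿ → Iⁿ of the n-cube Iⁿ = [0,1]ⁿ ⊂ ℝⁿ is embeddable in ℝ^{2n}: there exists a continuous injective map ψ : Iⁿ → ℝ^{2n} such that ψ ∘ f is approximable by embeddings, i.e., for every ε > 0 there is a continuous injective map g : Iⁿ → ℝ^{2n} with dist(g x, ψ(f x)) < ε for all x. -/

import Mathlib

/-!
Embed the cube `C` as `C × {0} ⊂ ℝⁿ × ℝⁿ ≅ ℝ²ⁿ`, i.e. `ψ x = (x, 0)`. Then `ψ ∘ f` is the uniform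
limit as `δ → 0` of the maps `x ↦ (f x, δ • x)`, which are injective because their second
coordinate already is.
-/

open Function Set

def ApproximableByEmbeddings {X F : Type*} [TopologicalSpace X] [PseudoMetricSpace F]
    (φ : X → F) : Prop :=
  ∀ ε > (0 : ℝ), ∃ g : X → F, Continuous g ∧ Injective g ∧ ∀ x, dist (g x) (φ x) < ε

section Perturbation

variable {X 𝕜 E F : Type*} [NontriviallyNormedField 𝕜]
  [NormedAddCommGroup E] [NormedSpace 𝕜 E] [NormedAddCommGroup F] [NormedSpace 𝕜 F]
  (u : E × E →L[𝕜] F) (ψ₀ : X → E) (f : X → X)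

def perturbedGraph (δ : 𝕜) (x : X) : F := u (ψ₀ (f x), δ • ψ₀ x)

theorem continuous_perturbedGraph [TopologicalSpace X] (hψ₀ : Continuous ψ₀) (hf : Continuous f)
    (δ : 𝕜) :
    Continuous (perturbedGraph u ψ₀ f δ) := by
  unfold perturbedGraph
  fun_prop

theorem injective_perturbedGraph (hu : Injective u) (hψ₀ : Injective ψ₀) {δ : 𝕜} (hδ : δ ≠ 0) :
    Injective (perturbedGraph u ψ₀ f δ) := fun _ _ hxy =>
  hψ₀ <| smul_right_injective E hδ (Prod.ext_iff.1 (hu hxy)).2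

theorem dist_perturbedGraph_le {R : ℝ} (hR : ∀ x, ‖ψ₀ x‖ ≤ R) (δ : 𝕜) (x : X) :
    dist (perturbedGraph u ψ₀ f δ x) (u (ψ₀ (f x), 0)) ≤ ‖u‖ * (‖δ‖ * R) := calc
  dist (perturbedGraph u ψ₀ f δ x) (u (ψ₀ (f x), 0)) = ‖u (0, δ • ψ₀ x)‖ := by
    rw [dist_eq_norm, perturbedGraph, ← map_sub, Prod.mk_sub_mk, sub_self, sub_zero]
  _ ≤ ‖u‖ * ‖((0 : E), δ • ψ₀ x)‖ := u.le_opNorm _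
  _ = ‖u‖ * (‖δ‖ * ‖ψ₀ x‖) := by
    rw [Prod.norm_def, norm_zero, norm_smul, max_eq_right (by positivity)]
  _ ≤ ‖u‖ * (‖δ‖ * R) := by gcongr; exact hR x

theorem approximableByEmbeddings_comp [TopologicalSpace X] (hu : Injective u)
    (hψ₀ : Continuous ψ₀) (hψ₀_inj : Injective ψ₀)
    (hb : Bornology.IsBounded (range ψ₀)) (hf : Continuous f) :
    ApproximableByEmbeddings (fun x => u (ψ₀ (f x), 0)) := by
  intro ε hε
  obtain ⟨R, hR₀, hR⟩ : ∃ R, 0 ≤ R ∧ ∀ x, ‖ψ₀ x‖ ≤ R := by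
    obtain ⟨R, hR⟩ := hb.exists_norm_le
    exact ⟨max R 0, le_max_right _ _, fun x => (hR _ (mem_range_self x)).trans (le_max_left _ _)⟩
  obtain ⟨δ, hδ₀, hδ⟩ :=
    NormedField.exists_norm_lt 𝕜 (div_pos hε (by positivity : 0 < ‖u‖ * R + 1))
  refine ⟨perturbedGraph u ψ₀ f δ, continuous_perturbedGraph u ψ₀ f hψ₀ hf δ,
    injective_perturbedGraph u ψ₀ f hu hψ₀_inj (norm_pos_iff.1 hδ₀), fun x => ?_⟩
  calc dist (perturbedGraph u ψ₀ f δ x) (u (ψ₀ (f x), 0)) ≤ ‖u‖ * (‖δ‖ * R) :=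
        dist_perturbedGraph_le u ψ₀ f hR δ x
    _ < ‖δ‖ * (‖u‖ * R + 1) := by nlinarith
    _ ≤ ε := (lt_div_iff₀ (by positivity)).1 hδ |>.le

theorem exists_embedding_approximableByEmbeddings_comp [TopologicalSpace X]
    (hu : Injective u) (hψ₀ : Continuous ψ₀) (hψ₀_inj : Injective ψ₀)
    (hb : Bornology.IsBounded (range ψ₀)) (hf : Continuous f) :
    ∃ ψ : X → F, Continuous ψ ∧ Injective ψ ∧ ApproximableByEmbeddings (fun x => ψ (f x)) :=
  ⟨fun x => u (ψ₀ x, 0), by fun_prop, fun _ _ h => hψ₀_inj (Prod.ext_iff.1 (hu h)).1,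
    approximableByEmbeddings_comp u ψ₀ f hu hψ₀ hψ₀_inj hb hf⟩

end Perturbation

theorem isCompact_unitCube (n : ℕ) :
    IsCompact {x : EuclideanSpace ℝ (Fin n) | ∀ i, x i ∈ Icc (0 : ℝ) 1} := by
  simpa [Set.preimage, Set.pi] using
    (EuclideanSpace.equiv (Fin n) ℝ).toHomeomorph.isCompact_preimage.2
      (isCompact_univ_pi fun _ => isCompact_Icc (a := (0 : ℝ)) (b := 1))

theorem stmt_8_general (n : ℕ)
    (C : Set (EuclideanSpace ℝ (Fin n)))
    (hC : C = {x : EuclideanSpace ℝ (Fin n) | ∀ i, x i ∈ Set.Icc (0 : ℝ) 1})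
    (f : C → C) (hf : Continuous f) :
    ∃ ψ : C → EuclideanSpace ℝ (Fin (2 * n)),
      Continuous ψ ∧ Function.Injective ψ ∧
      ∀ ε > (0 : ℝ), ∃ g : C → EuclideanSpace ℝ (Fin (2 * n)),
        Continuous g ∧ Function.Injective g ∧ ∀ x, dist (g x) (ψ (f x)) < ε := by
  let u : (EuclideanSpace ℝ (Fin n) × EuclideanSpace ℝ (Fin n)) ≃L[ℝ]
      EuclideanSpace ℝ (Fin (2 * n)) :=
    .ofFinrankEq (by rw [Module.finrank_prod, finrank_euclideanSpace_fin,
      finrank_euclideanSpace_fin, two_mul])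
  have hb : Bornology.IsBounded (range ((↑) : C → EuclideanSpace ℝ (Fin n))) := by
    rw [Subtype.range_coe, hC]
    exact (isCompact_unitCube n).isBounded
  exact exists_embedding_approximableByEmbeddings_comp (u : _ →L[ℝ] _) _ f u.injective
    continuous_subtype_val Subtype.val_injective hb hf

/-- Sieklucki, 1969: For each n ≥ 1, every continuous self-map of the n-cube
Iⁿ = [0,1]ⁿ ⊂ ℝⁿ is embeddable in ℝ^{2n}. -/
theorem stmt_8 (n : ℕ) (hn : 1 ≤ n)
    (C : Set (EuclideanSpace ℝ (Fin n)))
    (hC : C = {x : EuclideanSpace ℝ (Fin n) | ∀ i, x i ∈ Set.Icc (0 : ℝ) 1})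
    (f : C → C) (hf : Continuous f) :
    ∃ ψ : C → EuclideanSpace ℝ (Fin (2 * n)),
      Continuous ψ ∧ Function.Injective ψ ∧
      ∀ ε > (0 : ℝ), ∃ g : C → EuclideanSpace ℝ (Fin (2 * n)),
        Continuous g ∧ Function.Injective g ∧ ∀ x, dist (g x) (ψ (f x)) < ε :=
  stmt_8_general n C hC f hf
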